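/- arXiv:2502.08897 — 3 statements merged into one kernel-verified Lean document; each statement's English description precedes it below -/
import Mathlib

section
/- For a real symmetric matrix H, its Green's function G(z) = (H-z)⁻¹ and one removed index k, the identity G^{(k)}_{ij} = G_{ij} - G_{ik} G_{kj} / G_{kk} holds for all i,j ≠ k, where G^{(k)} is the Green's function of the matrix obtained by deleting row and column k. In particular G_{kk} ≠ 0. -/
/-!
For Hermitian `A`, `star x ⬝ᵥ A x` is real, so `Im (star x ⬝ᵥ (A - z) x) = -Im z · ‖x‖²`. Hence
`A - z` is invertible when `Im z ≠ 0`, and taking for `x` the `k`-th column of `G = (A - z)⁻¹`,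
for which `(A - z) x = e_k`, gives `Im G_kk = Im z · ‖x‖² > 0`. The formula for `G^{(k)}` holds
for the inverse of any invertible matrix over a field: the vector `l ↦ G_lj - G_lk G_kj / G_kk`
vanishes at `l = k`, so applying the matrix with row and column `k` deleted to it is the same as
applying the full matrix.
-/

open Matrix

section Field

variable {K n : Type*} [Field K] [Fintype n] [DecidableEq n]

theorem Matrix.mulVec_col_nonsing_inv {A : Matrix n n K} (hA : IsUnit A.det) (k : n) :
    A *ᵥ A⁻¹.col k = Pi.single k 1 := by
  rw [← mulVec_single_one, mulVec_mulVec, mul_nonsing_inv A hA, one_mulVec]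

theorem Matrix.submatrix_ne_mul_eq_one {A G : Matrix n n K} (hAG : A * G = 1) {k : n}
    (hk : G k k ≠ 0) :
    A.submatrix ((↑) : {i // i ≠ k} → n) (↑) *
      of (fun i j : {i // i ≠ k} => G i j - G i k * G k j / G k k) = 1 := by
  ext i j
  set v : n → K := fun l => G l j - G l k * G k j / G k k
  have hvk : v k = 0 := by simp [v, hk]
  calc ∑ l : {l // l ≠ k}, A i l * v l
      = ∑ l, A i l * v l :=
        (Finset.sum_subtype (Finset.univ.erase k) (by simp) (fun l => A i l * v l)).symm.trans
          (Finset.sum_erase _ (by rw [hvk, mul_zero]))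
    _ = (A * G) i j - (A * G) i k * (G k j / G k k) := by
        simp only [v, mul_apply, mul_sub, Finset.sum_sub_distrib, Finset.sum_mul, mul_div_assoc,
          mul_assoc]
    _ = (1 : Matrix _ _ K) i j := by
        rw [hAG, one_apply_ne i.2, zero_mul, sub_zero]
        simp only [one_apply, Subtype.ext_iff]

theorem Matrix.inv_submatrix_ne {A : Matrix n n K} (hA : IsUnit A.det) {k : n}
    (hk : A⁻¹ k k ≠ 0) :
    (A.submatrix ((↑) : {i // i ≠ k} → n) (↑))⁻¹ =
      of (fun i j : {i // i ≠ k} => A⁻¹ i j - A⁻¹ i k * A⁻¹ k j / A⁻¹ k k) :=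
  inv_eq_right_inv (submatrix_ne_mul_eq_one (mul_nonsing_inv A hA) hk)

end Field

section RCLike

variable {𝕜 n : Type*} [RCLike 𝕜] [Fintype n]

theorem Matrix.star_dotProduct_self_eq_sum_norm_sq (x : n → 𝕜) :
    star x ⬝ᵥ x = ((∑ i, ‖x i‖ ^ 2 : ℝ) : 𝕜) := by
  simp [dotProduct, RCLike.conj_mul]

variable [DecidableEq n] {A : Matrix n n 𝕜}

theorem Matrix.IsHermitian.im_star_dotProduct_sub_smul_one_mulVec (hA : A.IsHermitian) (z : 𝕜)
    (x : n → 𝕜) :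
    RCLike.im (star x ⬝ᵥ (A - z • 1) *ᵥ x) = -RCLike.im z * ∑ i, ‖x i‖ ^ 2 := by
  rw [sub_mulVec, smul_mulVec, one_mulVec, dotProduct_sub, dotProduct_smul, map_sub,
    hA.im_star_dotProduct_mulVec_self, star_dotProduct_self_eq_sum_norm_sq, smul_eq_mul,
    RCLike.im_mul_ofReal]
  ring

theorem Matrix.IsHermitian.isUnit_det_sub_smul_one (hA : A.IsHermitian) {z : 𝕜}
    (hz : RCLike.im z ≠ 0) : IsUnit (A - z • 1).det := by
  rw [isUnit_iff_ne_zero]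
  intro hdet
  obtain ⟨v, hv, hAv⟩ := exists_mulVec_eq_zero_iff.mpr hdet
  have hnorm := hA.im_star_dotProduct_sub_smul_one_mulVec z v
  rw [hAv, dotProduct_zero, map_zero, zero_eq_mul, neg_eq_zero] at hnorm
  refine hv (funext fun i => norm_eq_zero.mp (pow_eq_zero_iff two_ne_zero |>.mp ?_))
  exact (Finset.sum_eq_zero_iff_of_nonneg fun i _ => by positivity).mp
    (hnorm.resolve_left hz) i (Finset.mem_univ i)

theorem Matrix.IsHermitian.im_inv_sub_smul_one_apply_self (hA : A.IsHermitian) {z : 𝕜}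
    (hz : RCLike.im z ≠ 0) (k : n) :
    RCLike.im ((A - z • 1)⁻¹ k k) = RCLike.im z * ∑ i, ‖(A - z • 1)⁻¹ i k‖ ^ 2 := by
  have h := hA.im_star_dotProduct_sub_smul_one_mulVec z ((A - z • 1)⁻¹.col k)
  rw [mulVec_col_nonsing_inv (hA.isUnit_det_sub_smul_one hz), dotProduct_single, mul_one] at h
  simpa using h

theorem Matrix.IsHermitian.im_inv_sub_smul_one_apply_self_pos (hA : A.IsHermitian) {z : 𝕜}
    (hz : 0 < RCLike.im z) (k : n) : 0 < RCLike.im ((A - z • 1)⁻¹ k k) := by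
  have hunit := hA.isUnit_det_sub_smul_one hz.ne'
  have hcol : (A - z • 1)⁻¹.col k ≠ 0 := fun h0 => by
    simpa [h0] using congrFun (mulVec_col_nonsing_inv hunit k) k
  obtain ⟨i, hi⟩ := Function.ne_iff.mp hcol
  rw [hA.im_inv_sub_smul_one_apply_self hz.ne']
  exact mul_pos hz (Finset.sum_pos' (fun i _ => by positivity)
    ⟨i, Finset.mem_univ i, pow_pos (norm_pos_iff.mpr hi) 2⟩)

end RCLike

/-- Removing one index from the Green's function: for real symmetric `H`,
`z` in the upper half-plane, `G = (H-z)⁻¹` and `G^{(k)} = (H^{(k)}-z)⁻¹`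
(the Green's function of the matrix obtained by deleting row and column `k`),
one has `G_{kk} ≠ 0` and `G^{(k)}_{ij} = G_{ij} - G_{ik} G_{kj} / G_{kk}`
for all `i, j ≠ k`. -/
theorem green_remove_one_index {N : ℕ} (H : Matrix (Fin N) (Fin N) ℝ) (hH : H.IsSymm)
    (z : ℂ) (hz : 0 < z.im) (k : Fin N) :
    let G := (H.map (fun x => (x : ℂ)) - z • (1 : Matrix (Fin N) (Fin N) ℂ))⁻¹
    let Gk := ((H.submatrix (fun i : {i : Fin N // i ≠ k} => (i : Fin N))
        (fun j : {j : Fin N // j ≠ k} => (j : Fin N))).map (fun x => (x : ℂ))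
        - z • (1 : Matrix {i : Fin N // i ≠ k} {i : Fin N // i ≠ k} ℂ))⁻¹
    G k k ≠ 0 ∧
      ∀ i j : {i : Fin N // i ≠ k},
        Gk i j = G (i : Fin N) (j : Fin N)
          - G (i : Fin N) k * G k (j : Fin N) / G k k := by
  intro G Gk
  set A := H.map (fun x => (x : ℂ)) - z • (1 : Matrix (Fin N) (Fin N) ℂ)
  have hHerm : (H.map (fun x => (x : ℂ))).IsHermitian :=
    (isHermitian_map_iff (fun _ => by simp) Complex.ofReal_injective).mpr hH
  have hGkk : G k k ≠ 0 := fun h0 =>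
    (hHerm.im_inv_sub_smul_one_apply_self_pos hz k).ne' (congrArg Complex.im h0)
  have hGk : Gk = (A.submatrix ((↑) : {i // i ≠ k} → Fin N) (↑))⁻¹ := by
    simp only [Gk]
    rw [← submatrix_one _ Subtype.val_injective]
    rfl
  refine ⟨hGkk, fun i j => ?_⟩
  rw [hGk, inv_submatrix_ne (hHerm.isUnit_det_sub_smul_one hz.ne') hGkk]
  rfl
end

section
/- Poisson kernel continuity (vague convergence from locally uniform convergence of harmonic extensions): Let μ and (μ_n) be signed Borel measures on ℝ with uniformly bounded integrals of 1/(1+x²) against their total variations. Define u_n(x+iy) = (1/π)∫ y dμ_n(s)/((x-s)²+y²) and similarly u for μ. If u_n → u uniformly on compact subsets of the upper half-plane, then μ_n → μ vaguely, i.e., ∫ f dμ_n → ∫ f dμ for every compactly supported smooth f : ℝ → ℝ. -/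
open MeasureTheory Filter
open scoped ENNReal

namespace PoissonAux


lemma weight_pos (x : ℝ) : 0 < 1 / (1 + x ^ 2) := by positivity

lemma weight_cont : Continuous fun x : ℝ => 1 / (1 + x ^ 2) :=
  continuous_const.div (by continuity) (fun x => by positivity)

lemma finiteOnCompacts (ν : Measure ℝ)
    (hν : (∫⁻ x : ℝ, ENNReal.ofReal (1 / (1 + x ^ 2)) ∂ν) ≠ ⊤) :
    IsFiniteMeasureOnCompacts ν := by
  constructor
  intro K hK
  obtain ⟨r, hr⟩ := hK.isBounded.subset_closedBall 0
  have hr0 : 0 ≤ max r 0 := le_max_right _ _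
  have hK' : K ⊆ Metric.closedBall 0 (max r 0) :=
    hr.trans (Metric.closedBall_subset_closedBall (le_max_left _ _))
  set S := Metric.closedBall (0:ℝ) (max r 0) with hS
  have hSm : MeasurableSet S := measurableSet_closedBall
  have key : ENNReal.ofReal (1 / (1 + (max r 0) ^ 2)) * ν S
      ≤ ∫⁻ x : ℝ, ENNReal.ofReal (1 / (1 + x ^ 2)) ∂ν := by
    rw [← setLIntegral_const S _]
    refine le_trans (setLIntegral_mono (by fun_prop) ?_) (setLIntegral_le_lintegral _ _)
    intro x hx
    have hx' : |x| ≤ max r 0 := by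
      simpa [Real.dist_eq] using (Metric.mem_closedBall.1 hx)
    refine ENNReal.ofReal_le_ofReal ?_
    have h2 : x ^ 2 ≤ (max r 0) ^ 2 := by
      have := abs_nonneg x
      nlinarith [neg_abs_le x, le_abs_self x]
    exact one_div_le_one_div_of_le (by positivity) (by linarith)
  have hpos : (0:ℝ) < 1 / (1 + (max r 0) ^ 2) := weight_pos _
  have hne : ENNReal.ofReal (1 / (1 + (max r 0) ^ 2)) ≠ 0 := by
    exact ne_of_gt (ENNReal.ofReal_pos.2 hpos)
  have hSfin : ν S < ⊤ := by
    by_contra h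
    push_neg at h
    have : ν S = ⊤ := top_le_iff.1 h
    rw [this, ENNReal.mul_top hne] at key
    exact hν (top_le_iff.1 key)
  exact lt_of_le_of_lt (measure_mono hK') hSfin

lemma integrable_weight (ν : Measure ℝ)
    (hν : (∫⁻ x : ℝ, ENNReal.ofReal (1 / (1 + x ^ 2)) ∂ν) ≠ ⊤) :
    Integrable (fun s : ℝ => 1 / (1 + s ^ 2)) ν := by
  refine ⟨weight_cont.aestronglyMeasurable, ?_⟩
  rw [hasFiniteIntegral_iff_ofReal (Eventually.of_forall fun x => (weight_pos x).le)]
  exact lt_top_iff_ne_top.2 hν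

lemma integral_weight_le (ν : Measure ℝ)
    (hν : (∫⁻ x : ℝ, ENNReal.ofReal (1 / (1 + x ^ 2)) ∂ν) ≠ ⊤) :
    ∫ s, 1 / (1 + s ^ 2) ∂ν = (∫⁻ x : ℝ, ENNReal.ofReal (1 / (1 + x ^ 2)) ∂ν).toReal := by
  rw [integral_eq_lintegral_of_nonneg_ae (Eventually.of_forall fun x => (weight_pos x).le)
    weight_cont.aestronglyMeasurable]



lemma denom_lower {R y x s : ℝ} (hR : 0 ≤ R) (hy : 0 < y) (hx : |x| ≤ R) :
    min (y ^ 2 / (4 * R ^ 2 + 3)) (1 / 4) * (1 + s ^ 2) ≤ (x - s) ^ 2 + y ^ 2 := by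
  have hx2 : x ^ 2 ≤ R ^ 2 := by nlinarith [neg_abs_le x, le_abs_self x, abs_nonneg x]
  have hden : (0:ℝ) < 4 * R ^ 2 + 3 := by positivity
  rcases le_or_gt (s ^ 2) (4 * R ^ 2 + 2) with h | h
  · have h1 : min (y ^ 2 / (4 * R ^ 2 + 3)) (1 / 4) * (1 + s ^ 2)
        ≤ (y ^ 2 / (4 * R ^ 2 + 3)) * (1 + s ^ 2) := by
      have := min_le_left (y ^ 2 / (4 * R ^ 2 + 3)) (1/4 : ℝ)
      nlinarith [sq_nonneg s]
    have h2 : (y ^ 2 / (4 * R ^ 2 + 3)) * (1 + s ^ 2) ≤ y ^ 2 := by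
      rw [div_mul_eq_mul_div, div_le_iff₀ hden]
      nlinarith [sq_nonneg y]
    nlinarith [sq_nonneg (x - s)]
  · have h1 : min (y ^ 2 / (4 * R ^ 2 + 3)) (1 / 4) * (1 + s ^ 2)
        ≤ (1/4) * (1 + s ^ 2) := by
      have := min_le_right (y ^ 2 / (4 * R ^ 2 + 3)) (1/4 : ℝ)
      nlinarith [sq_nonneg s]
    nlinarith [sq_nonneg (x - s), sq_nonneg y, sq_nonneg (x + s)]

lemma kernel_le {R y x s : ℝ} (hR : 0 ≤ R) (hy : 0 < y) (hx : |x| ≤ R) :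
    y / ((x - s) ^ 2 + y ^ 2) ≤
      y / min (y ^ 2 / (4 * R ^ 2 + 3)) (1 / 4) * (1 / (1 + s ^ 2)) := by
  have hc : 0 < min (y ^ 2 / (4 * R ^ 2 + 3)) (1 / 4) := lt_min (by positivity) (by norm_num)
  rw [div_mul_div_comm, mul_one]
  gcongr
  · exact denom_lower hR hy hx

lemma far_denom {R x s : ℝ} (hR : 0 ≤ R) (hx : |x| ≤ R) (hs : R + 1 ≤ |s|) :
    1 + s ^ 2 ≤ (3 + 2 * R ^ 2) * (x - s) ^ 2 := by
  have hx2 : x ^ 2 ≤ R ^ 2 := by nlinarith [neg_abs_le x, le_abs_self x, abs_nonneg x]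
  have h1 : |s| - R ≤ |x - s| := by
    have h := abs_sub_abs_le_abs_sub s x
    have : |s| - R ≤ |s| - |x| := by linarith
    calc |s| - R ≤ |s| - |x| := this
      _ ≤ |s - x| := h
      _ = |x - s| := abs_sub_comm s x
  have h0 : 0 ≤ |s| - R := by linarith
  have h2 : (|s| - R) ^ 2 ≤ (x - s) ^ 2 := by
    calc (|s| - R) ^ 2 ≤ |x - s| ^ 2 := by nlinarith [abs_nonneg (x - s)]
      _ = (x - s) ^ 2 := sq_abs _
  have hs2 : s ^ 2 = |s| ^ 2 := (sq_abs s).symm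
  nlinarith [sq_nonneg (R * (|s| - R) - 1), sq_nonneg (|s| - R - 1), abs_nonneg s]



lemma kernel_cont {y : ℝ} (hy : 0 < y) :
    Continuous fun p : ℝ × ℝ => y / ((p.1 - p.2) ^ 2 + y ^ 2) :=
  continuous_const.div (by fun_prop) (fun p => by positivity)

lemma integrable_prod {f : ℝ → ℝ} {R y : ℝ} (ν : Measure ℝ)
    (hf : Continuous f) (hsupp : ∀ x, f x ≠ 0 → |x| ≤ R)
    (hR : 0 ≤ R) (hy : 0 < y)
    (hν : (∫⁻ x : ℝ, ENNReal.ofReal (1 / (1 + x ^ 2)) ∂ν) ≠ ⊤)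
    (hfi : Integrable f volume) :
    Integrable (fun p : ℝ × ℝ => f p.1 * (y / ((p.1 - p.2) ^ 2 + y ^ 2)))
      ((volume : Measure ℝ).prod ν) := by
  haveI := finiteOnCompacts ν hν
  have hbound : Integrable
      (fun p : ℝ × ℝ => |f p.1| * (y / min (y ^ 2 / (4 * R ^ 2 + 3)) (1 / 4) * (1 / (1 + p.2 ^ 2))))
      ((volume : Measure ℝ).prod ν) :=
    hfi.abs.mul_prod ((integrable_weight ν hν).const_mul _)
  refine hbound.mono' ?_ ?_
  · exact ((hf.comp continuous_fst).mul (kernel_cont hy)).aestronglyMeasurable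
  · refine Eventually.of_forall fun p => ?_
    by_cases h0 : f p.1 = 0
    · simp [h0]
    · have hker := kernel_le (R := R) (x := p.1) (s := p.2) hR hy (hsupp _ h0)
      have hknn : 0 ≤ y / ((p.1 - p.2) ^ 2 + y ^ 2) := by positivity
      rw [norm_mul, Real.norm_eq_abs, Real.norm_eq_abs, abs_of_nonneg hknn]
      exact mul_le_mul_of_nonneg_left hker (abs_nonneg _)

lemma fubini_poisson {f : ℝ → ℝ} {R y : ℝ} (ν : Measure ℝ)
    (hf : Continuous f) (hsupp : ∀ x, f x ≠ 0 → |x| ≤ R)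
    (hR : 0 ≤ R) (hy : 0 < y)
    (hν : (∫⁻ x : ℝ, ENNReal.ofReal (1 / (1 + x ^ 2)) ∂ν) ≠ ⊤)
    (hfi : Integrable f volume) :
    ∫ x, f x * ∫ s, y / ((x - s) ^ 2 + y ^ 2) ∂ν
      = ∫ s, (∫ x, f x * (y / ((x - s) ^ 2 + y ^ 2))) ∂ν := by
  haveI := finiteOnCompacts ν hν
  have hint := integrable_prod ν hf hsupp hR hy hν hfi
  have h := integral_integral_swap
    (f := fun x s => f x * (y / ((x - s) ^ 2 + y ^ 2))) (μ := (volume : Measure ℝ)) (ν := ν) hint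
  rw [← h]
  congr 1
  ext x
  exact (integral_const_mul (f x) _).symm

lemma subst {f : ℝ → ℝ} {y : ℝ} (hy : 0 < y) (s : ℝ) :
    ∫ x, f x * (y / ((x - s) ^ 2 + y ^ 2))
      = ∫ t, f (s + y * t) * (1 / (1 + t ^ 2)) := by
  have hyne : y ≠ 0 := hy.ne'
  have h1 := integral_add_left_eq_self (μ := (volume : Measure ℝ))
    (fun x => f x * (y / ((x - s) ^ 2 + y ^ 2))) s
  simp only [add_sub_cancel_left] at h1
  have h2 := MeasureTheory.Measure.integral_comp_mul_left
    (fun u => f (s + u) * (y / (u ^ 2 + y ^ 2))) y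
  calc ∫ x, f x * (y / ((x - s) ^ 2 + y ^ 2))
      = ∫ u, f (s + u) * (y / (u ^ 2 + y ^ 2)) := h1.symm
    _ = y • ∫ t, f (s + y * t) * (y / ((y * t) ^ 2 + y ^ 2)) := by
        rw [h2, smul_smul, abs_inv, abs_of_pos hy, mul_inv_cancel₀ hyne, one_smul]
    _ = ∫ t, y • (f (s + y * t) * (y / ((y * t) ^ 2 + y ^ 2))) := (integral_smul _ _).symm
    _ = ∫ t, f (s + y * t) * (1 / (1 + t ^ 2)) := by
        congr 1
        ext t
        rw [smul_eq_mul]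
        have : (y * t) ^ 2 + y ^ 2 = y ^ 2 * (1 + t ^ 2) := by ring
        rw [this]
        field_simp



lemma integrable_weight_vol : Integrable (fun t : ℝ => 1 / (1 + t ^ 2)) volume := by
  simpa [one_div] using integrable_inv_one_add_sq

lemma integral_weight_vol : ∫ t : ℝ, 1 / (1 + t ^ 2) = Real.pi := by
  simpa [one_div] using integral_univ_inv_one_add_sq

lemma integrable_min_mul {L M y : ℝ} (hL0 : 0 ≤ L) (hM : 0 ≤ M) (hy : 0 ≤ y) :
    Integrable (fun t : ℝ => min (L * y * |t|) (2 * M) * (1 / (1 + t ^ 2))) volume := by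
  refine (integrable_weight_vol.const_mul (2 * M)).mono'
    ((((continuous_const.mul continuous_abs).min continuous_const).mul
      weight_cont).aestronglyMeasurable) (Eventually.of_forall fun t => ?_)
  have h1 : 0 ≤ min (L * y * |t|) (2 * M) := le_min (by positivity) (by positivity)
  have h2 : (0:ℝ) ≤ 1 / (1 + t ^ 2) := (weight_pos t).le
  rw [Real.norm_eq_abs, abs_of_nonneg (mul_nonneg h1 h2)]
  exact mul_le_mul_of_nonneg_right (min_le_right _ _) h2

lemma psi_nonneg {L M y : ℝ} (hL0 : 0 ≤ L) (hM : 0 ≤ M) (hy : 0 ≤ y) :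
    0 ≤ ∫ t : ℝ, min (L * y * |t|) (2 * M) * (1 / (1 + t ^ 2)) :=
  integral_nonneg fun t => mul_nonneg (le_min (by positivity) (by positivity)) (weight_pos t).le

lemma psi_tendsto {L M : ℝ} (hL0 : 0 ≤ L) (hM : 0 ≤ M) :
    Tendsto (fun y : ℝ => ∫ t : ℝ, min (L * y * |t|) (2 * M) * (1 / (1 + t ^ 2)))
      (nhdsWithin 0 (Set.Ioi 0)) (nhds 0) := by
  have main : Tendsto (fun y : ℝ => ∫ t : ℝ, min (L * y * |t|) (2 * M) * (1 / (1 + t ^ 2)))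
      (nhdsWithin 0 (Set.Ioi 0)) (nhds (∫ t : ℝ, (0:ℝ))) := by
    refine tendsto_integral_filter_of_dominated_convergence
      (fun t => 2 * M * (1 / (1 + t ^ 2))) ?_ ?_ ?_ ?_
    · exact Eventually.of_forall fun y =>
        ((((continuous_const.mul continuous_abs).min continuous_const).mul
          weight_cont).aestronglyMeasurable)
    · filter_upwards [self_mem_nhdsWithin] with y hy
      refine Eventually.of_forall fun t => ?_
      have hy0 : (0:ℝ) ≤ y := (Set.mem_Ioi.1 hy).le
      have h1 : 0 ≤ min (L * y * |t|) (2 * M) := le_min (by positivity) (by positivity)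
      have h2 : (0:ℝ) ≤ 1 / (1 + t ^ 2) := (weight_pos t).le
      rw [Real.norm_eq_abs, abs_of_nonneg (mul_nonneg h1 h2)]
      exact mul_le_mul_of_nonneg_right (min_le_right _ _) h2
    · exact integrable_weight_vol.const_mul _
    · refine Eventually.of_forall fun t => ?_
      have hc : Continuous fun y : ℝ => min (L * y * |t|) (2 * M) * (1 / (1 + t ^ 2)) := by
        exact (((continuous_const.mul continuous_id).mul continuous_const).min
          continuous_const).mul continuous_const
      have := (hc.tendsto 0).mono_left (nhdsWithin_le_nhds (s := Set.Ioi (0:ℝ)))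
      simpa [min_eq_left (by positivity : (0:ℝ) ≤ 2 * M)] using this
  simpa using main

lemma integrable_slice {f : ℝ → ℝ} {y : ℝ} (hy : 0 < y) (hf : Continuous f)
    (hfi : Integrable f volume) (s : ℝ) :
    Integrable (fun x => f x * (y / ((x - s) ^ 2 + y ^ 2))) volume := by
  refine (hfi.abs.mul_const (1 / y)).mono'
    ((hf.mul (continuous_const.div (by continuity) (fun x => by positivity))).aestronglyMeasurable)
    (Eventually.of_forall fun x => ?_)
  have hk : 0 ≤ y / ((x - s) ^ 2 + y ^ 2) := by positivity
  rw [Real.norm_eq_abs, abs_mul, abs_of_nonneg hk]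
  refine mul_le_mul_of_nonneg_left ?_ (abs_nonneg _)
  rw [div_le_div_iff₀ (by positivity) hy]
  nlinarith [sq_nonneg (x - s), sq_nonneg y]

lemma near_est {f : ℝ → ℝ} {y L M : ℝ} (hy : 0 < y) (hM : ∀ x, |f x| ≤ M)
    (hL : ∀ a b, |f a - f b| ≤ L * |a - b|) (hf : Continuous f) (s : ℝ) :
    |(∫ t, f (s + y * t) * (1 / (1 + t ^ 2))) - Real.pi * f s|
      ≤ ∫ t : ℝ, min (L * y * |t|) (2 * M) * (1 / (1 + t ^ 2)) := by
  have hM0 : 0 ≤ M := le_trans (abs_nonneg _) (hM 0)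
  have hL0 : 0 ≤ L := by
    by_contra h
    push_neg at h
    have := hL 0 1
    simp at this
    nlinarith [abs_nonneg (f 0 - f 1)]
  have h1 : Integrable (fun t => f (s + y * t) * (1 / (1 + t ^ 2))) volume := by
    refine (integrable_weight_vol.const_mul M).mono'
      ((hf.comp (by continuity)).mul weight_cont).aestronglyMeasurable
      (Eventually.of_forall fun t => ?_)
    rw [Real.norm_eq_abs, abs_mul, abs_of_nonneg (weight_pos t).le]
    exact mul_le_mul_of_nonneg_right (hM _) (weight_pos t).le
  have h2 : Integrable (fun t : ℝ => f s * (1 / (1 + t ^ 2))) volume :=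
    integrable_weight_vol.const_mul _
  have hpi : Real.pi * f s = ∫ t : ℝ, f s * (1 / (1 + t ^ 2)) := by
    rw [integral_const_mul, integral_weight_vol, mul_comm]
  rw [hpi, ← integral_sub h1 h2, ← Real.norm_eq_abs]
  refine le_trans (norm_integral_le_integral_norm _) ?_
  refine integral_mono (h1.sub h2).norm (integrable_min_mul hL0 hM0 hy.le) fun t => ?_
  have h2' : (0:ℝ) ≤ 1 / (1 + t ^ 2) := (weight_pos t).le
  rw [Real.norm_eq_abs, ← sub_mul, abs_mul, abs_of_nonneg h2']
  refine mul_le_mul_of_nonneg_right (le_min ?_ ?_) h2'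
  · have := hL (s + y * t) s
    simpa [abs_mul, abs_of_pos hy, mul_assoc] using this
  · have := abs_sub (f (s + y * t)) (f s)
    calc |f (s + y * t) - f s| ≤ |f (s + y * t)| + |f s| := abs_sub _ _
      _ ≤ M + M := add_le_add (hM _) (hM _)
      _ = 2 * M := by ring



lemma far_est {f : ℝ → ℝ} {R y : ℝ} (hR : 0 ≤ R) (hy : 0 < y) (hf : Continuous f)
    (hsupp : ∀ x, f x ≠ 0 → |x| ≤ R) (hfi : Integrable f volume) {s : ℝ} (hs : R + 1 ≤ |s|) :
    |∫ x, f x * (y / ((x - s) ^ 2 + y ^ 2))|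
      ≤ (3 + 2 * R ^ 2) * y * (∫ x, |f x|) * (1 / (1 + s ^ 2)) := by
  have h3 : (0:ℝ) < 3 + 2 * R ^ 2 := by positivity
  have hw : (0:ℝ) < 1 + s ^ 2 := by positivity
  rw [← Real.norm_eq_abs]
  refine le_trans (norm_integral_le_integral_norm _) ?_
  have key : ∀ x, ‖f x * (y / ((x - s) ^ 2 + y ^ 2))‖
      ≤ |f x| * ((3 + 2 * R ^ 2) * y * (1 / (1 + s ^ 2))) := by
    intro x
    rw [Real.norm_eq_abs, abs_mul, abs_of_nonneg (by positivity : (0:ℝ) ≤ y / ((x - s) ^ 2 + y ^ 2))]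
    by_cases h0 : f x = 0
    · simp [h0]
    · refine mul_le_mul_of_nonneg_left ?_ (abs_nonneg _)
      have hd := far_denom hR (hsupp x h0) hs
      calc y / ((x - s) ^ 2 + y ^ 2) ≤ y / ((1 + s ^ 2) / (3 + 2 * R ^ 2)) := by
            have hpos : (0:ℝ) < (1 + s ^ 2) / (3 + 2 * R ^ 2) := div_pos hw h3
            have hle : (1 + s ^ 2) / (3 + 2 * R ^ 2) ≤ (x - s) ^ 2 + y ^ 2 := by
              rw [div_le_iff₀ h3]
              nlinarith [sq_nonneg y]
            gcongr
        _ = (3 + 2 * R ^ 2) * y * (1 / (1 + s ^ 2)) := by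
            field_simp
  refine le_trans (integral_mono (integrable_slice hy hf hfi s).norm
    (hfi.abs.mul_const _) key) ?_
  rw [integral_mul_const]
  ring_nf
  exact le_refl _



lemma pointwise_bound {f : ℝ → ℝ} {R y L M : ℝ} (hR : 0 ≤ R) (hy : 0 < y)
    (hf : Continuous f) (hsupp : ∀ x, f x ≠ 0 → |x| ≤ R) (hfi : Integrable f volume)
    (hM : ∀ x, |f x| ≤ M) (hL : ∀ a b, |f a - f b| ≤ L * |a - b|) (hL0 : 0 ≤ L) (s : ℝ) :
    |(∫ x, f x * (y / ((x - s) ^ 2 + y ^ 2))) - Real.pi * f s|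
      ≤ ((1 + (R + 1) ^ 2) * (∫ t : ℝ, min (L * y * |t|) (2 * M) * (1 / (1 + t ^ 2)))
          + (3 + 2 * R ^ 2) * y * (∫ x, |f x|)) * (1 / (1 + s ^ 2)) := by
  have hM0 : 0 ≤ M := le_trans (abs_nonneg _) (hM 0)
  have hw : (0:ℝ) < 1 + s ^ 2 := by positivity
  have hpsi := psi_nonneg (y := y) (L := L) (M := M) hL0 hM0 hy.le
  have hI : 0 ≤ ∫ x, |f x| := integral_nonneg fun x => abs_nonneg _
  rcases le_or_gt (R + 1) |s| with hs | hs
  · have hfs : f s = 0 := by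
      by_contra h0
      have := hsupp s h0
      linarith
    rw [hfs, mul_zero, sub_zero]
    refine le_trans (far_est hR hy hf hsupp hfi hs) ?_
    have : (0:ℝ) ≤ (1 + (R + 1) ^ 2) * (∫ t : ℝ, min (L * y * |t|) (2 * M) * (1 / (1 + t ^ 2)))
      := by positivity
    nlinarith [weight_pos s]
  · rw [subst hy s]
    refine le_trans (near_est hy hM hL hf s) ?_
    rw [mul_one_div, le_div_iff₀ hw]
    have hs2 : s ^ 2 ≤ (R + 1) ^ 2 := by
      nlinarith [neg_abs_le s, le_abs_self s, abs_nonneg s]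
    nlinarith [mul_nonneg (mul_nonneg (by positivity : (0:ℝ) ≤ 3 + 2 * R ^ 2) hy.le) hI]

lemma measure_est {f : ℝ → ℝ} {R y L M : ℝ} (ν : Measure ℝ)
    (hν : (∫⁻ x : ℝ, ENNReal.ofReal (1 / (1 + x ^ 2)) ∂ν) ≠ ⊤)
    (hR : 0 ≤ R) (hy : 0 < y)
    (hf : Continuous f) (hcs : HasCompactSupport f)
    (hsupp : ∀ x, f x ≠ 0 → |x| ≤ R) (hfi : Integrable f volume)
    (hM : ∀ x, |f x| ≤ M) (hL : ∀ a b, |f a - f b| ≤ L * |a - b|) (hL0 : 0 ≤ L) :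
    |(∫ s, (∫ x, f x * (y / ((x - s) ^ 2 + y ^ 2))) ∂ν) - Real.pi * ∫ s, f s ∂ν|
      ≤ ((1 + (R + 1) ^ 2) * (∫ t : ℝ, min (L * y * |t|) (2 * M) * (1 / (1 + t ^ 2)))
          + (3 + 2 * R ^ 2) * y * (∫ x, |f x|))
        * (∫⁻ x : ℝ, ENNReal.ofReal (1 / (1 + x ^ 2)) ∂ν).toReal := by
  haveI := finiteOnCompacts ν hν
  set E := (1 + (R + 1) ^ 2) * (∫ t : ℝ, min (L * y * |t|) (2 * M) * (1 / (1 + t ^ 2)))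
          + (3 + 2 * R ^ 2) * y * (∫ x, |f x|) with hE
  have hgint : Integrable (fun s => ∫ x, f x * (y / ((x - s) ^ 2 + y ^ 2))) ν :=
    (integrable_prod ν hf hsupp hR hy hν hfi).integral_prod_right
  have hfν : Integrable f ν := hf.integrable_of_hasCompactSupport hcs
  have hpif : Integrable (fun s => Real.pi * f s) ν := hfν.const_mul _
  rw [show Real.pi * ∫ s, f s ∂ν = ∫ s, Real.pi * f s ∂ν from (integral_const_mul _ _).symm,
    ← integral_sub hgint hpif, ← Real.norm_eq_abs]
  refine le_trans (norm_integral_le_integral_norm _) ?_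
  have hmono : ∀ s, ‖(∫ x, f x * (y / ((x - s) ^ 2 + y ^ 2))) - Real.pi * f s‖
      ≤ E * (1 / (1 + s ^ 2)) := fun s => by
    rw [Real.norm_eq_abs]
    exact pointwise_bound hR hy hf hsupp hfi hM hL hL0 s
  refine le_trans (integral_mono (hgint.sub hpif).norm
    ((integrable_weight ν hν).const_mul E) fun s => hmono s) ?_
  rw [integral_const_mul, integral_weight_le ν hν]


end PoissonAux

open PoissonAux

/-- The Poisson integral of a signed measure, represented via its Jordan-type
decomposition as a difference `μp - μm` of positive measures:
`u(x+iy) = (1/π) ∫ y d(μp-μm)(s) / ((x-s)² + y²)`. -/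
noncomputable def poissonIntegral (μp μm : Measure ℝ) (z : ℂ) : ℝ :=
  (1 / Real.pi) *
    ((∫ s : ℝ, z.im / ((z.re - s) ^ 2 + z.im ^ 2) ∂μp)
      - ∫ s : ℝ, z.im / ((z.re - s) ^ 2 + z.im ^ 2) ∂μm)

/-- Vague convergence from locally uniform convergence of harmonic (Poisson)
extensions: let `μ_n = μp_n - μm_n` and `μ = μp - μm` be signed Borel measures
on `ℝ` whose total variations integrate `1/(1+x²)` uniformly boundedly. If the
Poisson integrals `u_n` converge to `u` uniformly on every compact subset of the
upper half-plane, then `μ_n → μ` vaguely: `∫ f dμ_n → ∫ f dμ` for every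
compactly supported smooth `f : ℝ → ℝ`. -/
theorem vague_convergence_of_poisson_convergence
    (μp μm : Measure ℝ) (μps μms : ℕ → Measure ℝ)
    (hμ : (∫⁻ x : ℝ, ENNReal.ofReal (1 / (1 + x ^ 2)) ∂(μp + μm)) < ⊤)
    (hμn : ∃ C : ℝ≥0∞, C < ⊤ ∧ ∀ n,
      (∫⁻ x : ℝ, ENNReal.ofReal (1 / (1 + x ^ 2)) ∂(μps n + μms n)) ≤ C)
    (hconv : ∀ K : Set ℂ, IsCompact K → K ⊆ {z : ℂ | 0 < z.im} →
      TendstoUniformlyOn (fun n z => poissonIntegral (μps n) (μms n) z)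
        (fun z => poissonIntegral μp μm z) atTop K) :
    ∀ f : ℝ → ℝ, ContDiff ℝ (⊤ : ℕ∞) f → HasCompactSupport f →
      Tendsto (fun n => (∫ x, f x ∂(μps n)) - ∫ x, f x ∂(μms n)) atTop
        (nhds ((∫ x, f x ∂μp) - ∫ x, f x ∂μm)) := by
  obtain ⟨C, hC, hCn⟩ := hμn
  intro f hfsm hfcs
  have hπ : (0:ℝ) < Real.pi := Real.pi_pos
  have hfc : Continuous f := hfsm.continuous
  have hfi : Integrable f volume := hfc.integrable_of_hasCompactSupport hfcs
  -- support radius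
  obtain ⟨R0, hR0⟩ := (hfcs : IsCompact (tsupport f)).isBounded.subset_closedBall 0
  set R : ℝ := max R0 0 with hRdef
  have hR : 0 ≤ R := le_max_right _ _
  have hsupp : ∀ x, f x ≠ 0 → |x| ≤ R := by
    intro x hx
    have hmem : x ∈ tsupport f := subset_tsupport f hx
    have := hR0 hmem
    rw [Metric.mem_closedBall, Real.dist_eq, sub_zero] at this
    exact le_trans this (le_max_left _ _)
  -- bounds on f
  obtain ⟨M, hMn⟩ := hfcs.exists_bound_of_continuous hfc
  have hM : ∀ x, |f x| ≤ M := fun x => by simpa [Real.norm_eq_abs] using hMn x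
  have hM0 : 0 ≤ M := le_trans (abs_nonneg _) (hM 0)
  obtain ⟨Lnn, hLip⟩ := hfsm.lipschitzWith_of_hasCompactSupport hfcs (by simp)
  set L : ℝ := (Lnn : ℝ) with hLdef
  have hL0 : 0 ≤ L := Lnn.coe_nonneg
  have hL : ∀ a b, |f a - f b| ≤ L * |a - b| := by
    intro a b
    have := hLip.dist_le_mul a b
    simpa [Real.dist_eq] using this
  set I : ℝ := ∫ x, |f x| with hIdef
  have hI : 0 ≤ I := integral_nonneg fun x => abs_nonneg _
  -- measure finiteness facts
  have hsplit : ∀ (ν₁ ν₂ : Measure ℝ),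
      (∫⁻ x : ℝ, ENNReal.ofReal (1 / (1 + x ^ 2)) ∂(ν₁ + ν₂))
        = (∫⁻ x : ℝ, ENNReal.ofReal (1 / (1 + x ^ 2)) ∂ν₁)
          + (∫⁻ x : ℝ, ENNReal.ofReal (1 / (1 + x ^ 2)) ∂ν₂) := fun ν₁ ν₂ =>
    lintegral_add_measure _ ν₁ ν₂
  have hμp : (∫⁻ x : ℝ, ENNReal.ofReal (1 / (1 + x ^ 2)) ∂μp) ≠ ⊤ := by
    refine ne_top_of_le_ne_top hμ.ne ?_
    rw [hsplit]; exact le_self_add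
  have hμm : (∫⁻ x : ℝ, ENNReal.ofReal (1 / (1 + x ^ 2)) ∂μm) ≠ ⊤ := by
    refine ne_top_of_le_ne_top hμ.ne ?_
    rw [hsplit]; exact le_add_self
  have hμpn : ∀ n, (∫⁻ x : ℝ, ENNReal.ofReal (1 / (1 + x ^ 2)) ∂(μps n)) ≠ ⊤ := by
    intro n
    refine ne_top_of_le_ne_top hC.ne (le_trans ?_ (hCn n))
    rw [hsplit]; exact le_self_add
  have hμmn : ∀ n, (∫⁻ x : ℝ, ENNReal.ofReal (1 / (1 + x ^ 2)) ∂(μms n)) ≠ ⊤ := by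
    intro n
    refine ne_top_of_le_ne_top hC.ne (le_trans ?_ (hCn n))
    rw [hsplit]; exact le_add_self
  set C0 : ℝ := (∫⁻ x : ℝ, ENNReal.ofReal (1 / (1 + x ^ 2)) ∂μp).toReal
    + (∫⁻ x : ℝ, ENNReal.ofReal (1 / (1 + x ^ 2)) ∂μm).toReal with hC0def
  have hC00 : 0 ≤ C0 := add_nonneg ENNReal.toReal_nonneg ENNReal.toReal_nonneg
  have hCnsum : ∀ n, (∫⁻ x : ℝ, ENNReal.ofReal (1 / (1 + x ^ 2)) ∂(μps n)).toReal
      + (∫⁻ x : ℝ, ENNReal.ofReal (1 / (1 + x ^ 2)) ∂(μms n)).toReal ≤ C.toReal := by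
    intro n
    rw [← ENNReal.toReal_add (hμpn n) (hμmn n)]
    exact ENNReal.toReal_mono hC.ne (le_trans (le_of_eq (hsplit _ _).symm) (hCn n))
  -- error function
  set ψ : ℝ → ℝ := fun y => ∫ t : ℝ, min (L * y * |t|) (2 * M) * (1 / (1 + t ^ 2)) with hψdef
  set Efun : ℝ → ℝ := fun y => (1 + (R + 1) ^ 2) * ψ y + (3 + 2 * R ^ 2) * y * I with hEdef
  have hEtendsto : Tendsto Efun (nhdsWithin 0 (Set.Ioi 0)) (nhds 0) := by
    have h1 : Tendsto (fun y => (1 + (R + 1) ^ 2) * ψ y) (nhdsWithin 0 (Set.Ioi 0))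
        (nhds ((1 + (R + 1) ^ 2) * 0)) := (psi_tendsto hL0 hM0).const_mul _
    have hc2 : Continuous fun y : ℝ => (3 + 2 * R ^ 2) * y * I := by continuity
    have h2 : Tendsto (fun y : ℝ => (3 + 2 * R ^ 2) * y * I) (nhdsWithin 0 (Set.Ioi 0))
        (nhds ((3 + 2 * R ^ 2) * 0 * I)) :=
      (hc2.tendsto 0).mono_left (nhdsWithin_le_nhds (s := Set.Ioi (0:ℝ)))
    have := h1.add h2
    simpa using this
  have hEnonneg : ∀ y : ℝ, 0 < y → 0 ≤ Efun y := by
    intro y hy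
    have := psi_nonneg (L := L) (M := M) (y := y) hL0 hM0 hy.le
    have h2 : (0:ℝ) ≤ (3 + 2 * R ^ 2) * y * I := by positivity
    simp only [hEdef]
    positivity
  -- reduce to π-scaled statement
  suffices H : Tendsto (fun n => Real.pi * ((∫ x, f x ∂(μps n)) - ∫ x, f x ∂(μms n))) atTop
      (nhds (Real.pi * ((∫ x, f x ∂μp) - ∫ x, f x ∂μm))) by
    have := H.const_mul (Real.pi)⁻¹
    simpa [← mul_assoc, inv_mul_cancel₀ hπ.ne'] using this
  rw [Metric.tendsto_atTop]
  intro ε hε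
  -- choose y
  set Ct : ℝ := C.toReal + C0 + 1 with hCtdef
  have hCt : 0 < Ct := by positivity
  have hδ : 0 < ε / 2 / Ct := by positivity
  obtain ⟨y, hyE, hy⟩ : ∃ y : ℝ, Efun y < ε / 2 / Ct ∧ 0 < y := by
    have := (hEtendsto.eventually (gt_mem_nhds hδ)).and self_mem_nhdsWithin
    obtain ⟨y, h1, h2⟩ := this.exists
    exact ⟨y, h1, h2⟩
  -- uniform convergence on the segment K
  set K : Set ℂ := (fun x : ℝ => (x : ℂ) + (y : ℂ) * Complex.I) '' Set.Icc (-R) R with hKdef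
  have hKcomp : IsCompact K := isCompact_Icc.image
    (Continuous.add (Complex.continuous_ofReal) continuous_const)
  have hKsub : K ⊆ {z : ℂ | 0 < z.im} := by
    rintro z ⟨x, hx, rfl⟩
    show 0 < ((x : ℂ) + (y : ℂ) * Complex.I).im
    rw [Complex.add_im, Complex.ofReal_im, Complex.mul_im, Complex.I_im, Complex.I_re,
      Complex.ofReal_im, Complex.ofReal_re]
    simpa using hy
  have huc := hconv K hKcomp hKsub
  rw [Metric.tendstoUniformlyOn_iff] at huc
  set ε' : ℝ := ε / 2 / (Real.pi * (I + 1)) with hε'def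
  have hε' : 0 < ε' := by positivity
  obtain ⟨N, hN⟩ := eventually_atTop.1 (huc ε' hε')
  refine ⟨N, fun n hn => ?_⟩
  have hNn := hN n hn
  -- notation
  set k : ℝ → ℝ → ℝ := fun x s => y / ((x - s) ^ 2 + y ^ 2) with hkdef
  set G : Measure ℝ → ℝ := fun ν => ∫ s, (∫ x, f x * k x s) ∂ν with hGdef
  have hre : ∀ x : ℝ, ((x : ℂ) + (y : ℂ) * Complex.I).re = x := fun x => by simp
  have him : ∀ x : ℝ, ((x : ℂ) + (y : ℂ) * Complex.I).im = y := fun x => by simp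
  -- per-measure Fubini identity
  have hfub : ∀ (ν₁ ν₂ : Measure ℝ),
      (∫⁻ x : ℝ, ENNReal.ofReal (1 / (1 + x ^ 2)) ∂ν₁) ≠ ⊤ →
      (∫⁻ x : ℝ, ENNReal.ofReal (1 / (1 + x ^ 2)) ∂ν₂) ≠ ⊤ →
      ∫ x : ℝ, f x * poissonIntegral ν₁ ν₂ ((x : ℂ) + (y : ℂ) * Complex.I)
        = (1 / Real.pi) * (G ν₁ - G ν₂) := by
    intro ν₁ ν₂ hν₁ hν₂
    haveI := finiteOnCompacts ν₁ hν₁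
    haveI := finiteOnCompacts ν₂ hν₂
    have hA : Integrable (fun x => f x * ∫ s, k x s ∂ν₁) volume := by
      refine ((integrable_prod ν₁ hfc hsupp hR hy hν₁ hfi).integral_prod_left).congr
        (Eventually.of_forall fun x => ?_)
      exact integral_const_mul (f x) _
    have hB : Integrable (fun x => f x * ∫ s, k x s ∂ν₂) volume := by
      refine ((integrable_prod ν₂ hfc hsupp hR hy hν₂ hfi).integral_prod_left).congr
        (Eventually.of_forall fun x => ?_)
      exact integral_const_mul (f x) _
    calc ∫ x : ℝ, f x * poissonIntegral ν₁ ν₂ ((x : ℂ) + (y : ℂ) * Complex.I)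
        = ∫ x : ℝ, (1 / Real.pi) *
            ((f x * ∫ s, k x s ∂ν₁) - f x * ∫ s, k x s ∂ν₂) := by
          congr 1
          ext x
          simp only [poissonIntegral, hre, him, hkdef]
          ring
      _ = (1 / Real.pi) * ((∫ x : ℝ, f x * ∫ s, k x s ∂ν₁)
            - ∫ x : ℝ, f x * ∫ s, k x s ∂ν₂) := by
          rw [integral_const_mul, integral_sub hA hB]
      _ = (1 / Real.pi) * (G ν₁ - G ν₂) := by
          rw [hGdef]
          simp only [hkdef]
          rw [fubini_poisson ν₁ hfc hsupp hR hy hν₁ hfi,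
            fubini_poisson ν₂ hfc hsupp hR hy hν₂ hfi]
  -- integrability of f * u for both families
  have hintu : ∀ (ν₁ ν₂ : Measure ℝ),
      (∫⁻ x : ℝ, ENNReal.ofReal (1 / (1 + x ^ 2)) ∂ν₁) ≠ ⊤ →
      (∫⁻ x : ℝ, ENNReal.ofReal (1 / (1 + x ^ 2)) ∂ν₂) ≠ ⊤ →
      Integrable (fun x : ℝ => f x * poissonIntegral ν₁ ν₂ ((x : ℂ) + (y : ℂ) * Complex.I))
        volume := by
    intro ν₁ ν₂ hν₁ hν₂
    haveI := finiteOnCompacts ν₁ hν₁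
    haveI := finiteOnCompacts ν₂ hν₂
    have hA : Integrable (fun x => f x * ∫ s, k x s ∂ν₁) volume := by
      refine ((integrable_prod ν₁ hfc hsupp hR hy hν₁ hfi).integral_prod_left).congr
        (Eventually.of_forall fun x => ?_)
      exact integral_const_mul (f x) _
    have hB : Integrable (fun x => f x * ∫ s, k x s ∂ν₂) volume := by
      refine ((integrable_prod ν₂ hfc hsupp hR hy hν₂ hfi).integral_prod_left).congr
        (Eventually.of_forall fun x => ?_)
      exact integral_const_mul (f x) _
    refine ((hA.sub hB).const_mul (1 / Real.pi)).congr (Eventually.of_forall fun x => ?_)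
    simp only [Pi.sub_apply, poissonIntegral, hre, him, hkdef]
    ring
  -- estimates
  have hest : ∀ (ν : Measure ℝ) (hν : (∫⁻ x : ℝ, ENNReal.ofReal (1 / (1 + x ^ 2)) ∂ν) ≠ ⊤),
      |G ν - Real.pi * ∫ s, f s ∂ν|
        ≤ Efun y * (∫⁻ x : ℝ, ENNReal.ofReal (1 / (1 + x ^ 2)) ∂ν).toReal := fun ν hν =>
    measure_est ν hν hR hy hfc hfcs hsupp hfi hM hL hL0
  -- middle term
  have hmid : |(G (μps n) - G (μms n)) - (G μp - G μm)| ≤ Real.pi * ε' * I := by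
    have h1 := hfub (μps n) (μms n) (hμpn n) (hμmn n)
    have h2 := hfub μp μm hμp hμm
    have hGn : G (μps n) - G (μms n)
        = Real.pi * ∫ x : ℝ, f x * poissonIntegral (μps n) (μms n)
            ((x : ℂ) + (y : ℂ) * Complex.I) := by
      rw [h1]
      field_simp
    have hG : G μp - G μm
        = Real.pi * ∫ x : ℝ, f x * poissonIntegral μp μm ((x : ℂ) + (y : ℂ) * Complex.I) := by
      rw [h2]
      field_simp
    rw [hGn, hG, ← mul_sub, abs_mul, abs_of_pos hπ, mul_assoc]
    refine mul_le_mul_of_nonneg_left ?_ hπ.le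
    have hin := hintu (μps n) (μms n) (hμpn n) (hμmn n)
    have hiu := hintu μp μm hμp hμm
    rw [← integral_sub hin hiu]
    have hdiffeq : ∀ x : ℝ, f x * poissonIntegral (μps n) (μms n) ((x : ℂ) + (y : ℂ) * Complex.I)
        - f x * poissonIntegral μp μm ((x : ℂ) + (y : ℂ) * Complex.I)
        = f x * (poissonIntegral (μps n) (μms n) ((x : ℂ) + (y : ℂ) * Complex.I)
            - poissonIntegral μp μm ((x : ℂ) + (y : ℂ) * Complex.I)) := fun x => by ring
    rw [← Real.norm_eq_abs]
    refine le_trans (norm_integral_le_integral_norm _) ?_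
    have hb : ∀ x : ℝ, ‖f x * poissonIntegral (μps n) (μms n) ((x : ℂ) + (y : ℂ) * Complex.I)
        - f x * poissonIntegral μp μm ((x : ℂ) + (y : ℂ) * Complex.I)‖ ≤ |f x| * ε' := by
      intro x
      rw [hdiffeq x, Real.norm_eq_abs, abs_mul]
      by_cases h0 : f x = 0
      · simp [h0]
      · refine mul_le_mul_of_nonneg_left ?_ (abs_nonneg _)
        have hxK : ((x : ℂ) + (y : ℂ) * Complex.I) ∈ K := by
          refine ⟨x, ?_, rfl⟩
          rw [Set.mem_Icc]
          have := hsupp x h0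
          rw [abs_le] at this
          exact this
        have := hNn _ hxK
        rw [Real.dist_eq] at this
        rw [abs_sub_comm]
        exact le_of_lt this
    refine le_trans (integral_mono (hin.sub hiu).norm (hfi.abs.mul_const ε') hb) ?_
    rw [integral_mul_const]
    rw [hIdef]
    exact le_of_eq (mul_comm _ _)
  -- combine
  rw [Real.dist_eq]
  have hεbound1 : |Real.pi * ((∫ x, f x ∂(μps n)) - ∫ x, f x ∂(μms n))
      - (G (μps n) - G (μms n))|
      ≤ Efun y * C.toReal := by
    have e1 := hest (μps n) (hμpn n)
    have e2 := hest (μms n) (hμmn n)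
    have : Real.pi * ((∫ x, f x ∂(μps n)) - ∫ x, f x ∂(μms n)) - (G (μps n) - G (μms n))
        = (Real.pi * ∫ x, f x ∂(μps n) - G (μps n))
          - (Real.pi * ∫ x, f x ∂(μms n) - G (μms n)) := by ring
    rw [this]
    refine le_trans (abs_sub _ _) ?_
    rw [abs_sub_comm (Real.pi * ∫ x, f x ∂(μps n)) (G (μps n)),
      abs_sub_comm (Real.pi * ∫ x, f x ∂(μms n)) (G (μms n))]
    refine le_trans (add_le_add e1 e2) ?_
    rw [← mul_add]
    exact mul_le_mul_of_nonneg_left (hCnsum n) (hEnonneg y hy)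
  have hεbound3 : |(G μp - G μm) - Real.pi * ((∫ x, f x ∂μp) - ∫ x, f x ∂μm)|
      ≤ Efun y * C0 := by
    have e1 := hest μp hμp
    have e2 := hest μm hμm
    have : (G μp - G μm) - Real.pi * ((∫ x, f x ∂μp) - ∫ x, f x ∂μm)
        = (G μp - Real.pi * ∫ x, f x ∂μp) - (G μm - Real.pi * ∫ x, f x ∂μm) := by ring
    rw [this]
    refine le_trans (abs_sub _ _) ?_
    refine le_trans (add_le_add e1 e2) ?_
    rw [hC0def, mul_add]
  have htri : |Real.pi * ((∫ x, f x ∂(μps n)) - ∫ x, f x ∂(μms n))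
      - Real.pi * ((∫ x, f x ∂μp) - ∫ x, f x ∂μm)|
      ≤ Efun y * C.toReal + Real.pi * ε' * I + Efun y * C0 := by
    have hsplit3 : Real.pi * ((∫ x, f x ∂(μps n)) - ∫ x, f x ∂(μms n))
        - Real.pi * ((∫ x, f x ∂μp) - ∫ x, f x ∂μm)
        = (Real.pi * ((∫ x, f x ∂(μps n)) - ∫ x, f x ∂(μms n)) - (G (μps n) - G (μms n)))
          + ((G (μps n) - G (μms n)) - (G μp - G μm))
          + ((G μp - G μm) - Real.pi * ((∫ x, f x ∂μp) - ∫ x, f x ∂μm)) := by ring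
    rw [hsplit3]
    refine le_trans (abs_add_le _ _) ?_
    refine add_le_add (le_trans (abs_add_le _ _) (add_le_add hεbound1 hmid)) hεbound3
  refine lt_of_le_of_lt htri ?_
  have hterm13 : Efun y * C.toReal + Efun y * C0 ≤ ε / 2 := by
    rw [← mul_add]
    have h1 : C.toReal + C0 ≤ Ct := by rw [hCtdef]; linarith
    have h2 : Efun y * (C.toReal + C0) ≤ (ε / 2 / Ct) * Ct := by
      refine mul_le_mul hyE.le h1 (by positivity) hδ.le
    rw [div_mul_cancel₀] at h2
    · exact h2
    · exact hCt.ne'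
  have hterm2 : Real.pi * ε' * I < ε / 2 := by
    have h1 : ε' * (Real.pi * (I + 1)) = ε / 2 := div_mul_cancel₀ _ (by positivity)
    have h3 : ε' * (Real.pi * (I + 1)) = ε' * Real.pi * I + ε' * Real.pi := by ring
    have h4 : Real.pi * ε' * I = ε' * Real.pi * I := by ring
    have h5 : 0 < ε' * Real.pi := mul_pos hε' hπ
    linarith
  have hfinal := add_lt_add_of_le_of_lt hterm13 hterm2
  have heq : ε / 2 + ε / 2 = ε := by ring
  rw [heq] at hfinal
  calc Efun y * C.toReal + Real.pi * ε' * I + Efun y * C0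
      = Efun y * C.toReal + Efun y * C0 + Real.pi * ε' * I := by ring
    _ < ε := hfinal
end

section
/- For the Airy₁-type tail bound transfer: suppose a nonincreasing sequence of reals x_1 ≥ x_2 ≥ … satisfies |{i : x_i ≥ -t}| ≤ C(1+t)^{3/2} for all t ≥ 0. Then for any w = E + iη with η > 0 and any j ≥ C(1+|w|)^{3/2} large enough, one has x_s - E ≤ 1 + |w| - (s/C)^{2/3} ≤ -(1/2)(s/C)^{2/3} for s > j, hence |x_s - w|² ≥ (1/4)(s/C)^{4/3}, and consequently Σ_{s>j} η/|x_s - w|² ≤ C' η / j^{1/6} for a constant C' depending only on C. -/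
/-! A nonincreasing sequence whose superlevel sets `{i | -t ≤ x i}` have at most `C(1+t)^{3/2}`
elements satisfies `x_s < -t` as soon as `s ≥ C(1+t)^{3/2}`; taking `t = (s/C)^{2/3} - 1` gives
the rigidity bound `x_s < 1 - (s/C)^{2/3}`. Beyond `s ≥ C(2(1+|w|))^{3/2}` (so `C'' = 2^{3/2}`)
half of `(s/C)^{2/3}` absorbs `1 + |w|`, whence `|x_s - w|² ≥ (x_s - E)² ≥ (s/C)^{4/3}/4`, and the
tail sum is at most `4C^{4/3}η Σ_{s>j} s^{-7/6} s^{-1/6} ≤ 4C^{4/3}η j^{-1/6} Σ_n n^{-7/6}`. -/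

theorem Antitone.lt_of_ncard_le {α : Type*} [LinearOrder α] {x : ℕ → α} (hx : Antitone x)
    {a : α} {s : ℕ} (hfin : {i | a ≤ x i}.Finite) (hs : {i | a ≤ x i}.ncard ≤ s) : x s < a := by
  by_contra! has
  have hsub : Set.Iic s ⊆ {i | a ≤ x i} := fun i hi => has.trans (hx hi)
  have := Set.ncard_le_ncard hsub hfin
  rw [Set.ncard_Iic_nat] at this
  omega

theorem lt_one_sub_rpow_of_ncard_le {x : ℕ → ℝ} (hx : Antitone x) {C p : ℝ} (hC : 0 < C)
    (hp : 0 < p)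
    (hcount : ∀ t : ℝ, 0 ≤ t → {i | -t ≤ x i}.Finite ∧
      ({i | -t ≤ x i}.ncard : ℝ) ≤ C * (1 + t) ^ p)
    {s : ℕ} (hs : C ≤ s) : x s < 1 - ((s : ℝ) / C) ^ p⁻¹ := by
  set t := ((s : ℝ) / C) ^ p⁻¹ - 1
  have hsC : 1 ≤ (s : ℝ) / C := (one_le_div hC).mpr hs
  have ht : 0 ≤ t := sub_nonneg.mpr (Real.one_le_rpow hsC (inv_nonneg.mpr hp.le))
  have hCt : C * (1 + t) ^ p = s := by
    rw [add_sub_cancel, Real.rpow_inv_rpow (by positivity) hp.ne', mul_div_cancel₀ _ hC.ne']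
  obtain ⟨hfin, hcard⟩ := hcount t ht
  have := hx.lt_of_ncard_le hfin (by exact_mod_cast hcard.trans hCt.le)
  linarith

theorem sub_re_le_of_ncard_le {x : ℕ → ℝ} (hx : Antitone x) {C p : ℝ} (hC : 0 < C)
    (hp : 0 < p)
    (hcount : ∀ t : ℝ, 0 ≤ t → {i | -t ≤ x i}.Finite ∧
      ({i | -t ≤ x i}.ncard : ℝ) ≤ C * (1 + t) ^ p)
    (w : ℂ) {s : ℕ} (hs : C * (2 * (1 + ‖w‖)) ^ p ≤ s) :
    x s - w.re ≤ -(1 / 2) * ((s : ℝ) / C) ^ p⁻¹ := by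
  have hgrowth : 2 * (1 + ‖w‖) ≤ ((s : ℝ) / C) ^ p⁻¹ :=
    (Real.le_rpow_inv_iff_of_pos (by positivity) (by positivity) hp).mpr
      ((le_div_iff₀' hC).mpr hs)
  have hCs : C ≤ s := by
    have : 1 ≤ (2 * (1 + ‖w‖)) ^ p := Real.one_le_rpow (by linarith [norm_nonneg w]) hp.le
    nlinarith
  have hrigid := lt_one_sub_rpow_of_ncard_le hx hC hp hcount hCs
  have hre : -‖w‖ ≤ w.re := (abs_le.mp (Complex.abs_re_le_norm w)).1
  linarith

theorem sq_sub_re_le_norm_sq (r : ℝ) (w : ℂ) : (r - w.re) ^ 2 ≤ ‖(r : ℂ) - w‖ ^ 2 := by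
  simpa [sq_abs] using pow_le_pow_left₀ (abs_nonneg _) (Complex.abs_re_le_norm ((r : ℂ) - w)) 2

theorem tsum_gt_le_of_le_mul_inv_rpow {f : ℕ → ℝ} {K a b : ℝ} {j : ℕ} (ha : 1 < a) (hb : 0 ≤ b)
    (hK : 0 ≤ K) (hj : 0 < j) (hf0 : ∀ s, 0 ≤ f s)
    (hf : ∀ s, j < s → f s ≤ K * ((s : ℝ) ^ (a + b))⁻¹) :
    ∑' s : {s : ℕ // j < s}, f s ≤ K * (∑' n : ℕ, ((n : ℝ) ^ a)⁻¹) / (j : ℝ) ^ b := by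
  set g : ℕ → ℝ := fun n => ((n : ℝ) ^ a)⁻¹
  have hg : Summable g := Real.summable_nat_rpow_inv.mpr ha
  have hj0 : (0 : ℝ) < j := by exact_mod_cast hj
  have hfg : ∀ s : {s : ℕ // j < s}, f s ≤ K / (j : ℝ) ^ b * g s := by
    rintro ⟨s, hs⟩
    have hs0 : (0 : ℝ) < s := by exact_mod_cast hj.trans hs
    have hjs : (j : ℝ) ^ b ≤ (s : ℝ) ^ b :=
      Real.rpow_le_rpow hj0.le (by exact_mod_cast hs.le) hb
    calc f s ≤ K * ((s : ℝ) ^ (a + b))⁻¹ := hf s hs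
      _ = K * (g s * ((s : ℝ) ^ b)⁻¹) := by rw [Real.rpow_add hs0, mul_inv]
      _ ≤ K * (g s * ((j : ℝ) ^ b)⁻¹) := by gcongr
      _ = K / (j : ℝ) ^ b * g s := by ring
  have hgj : Summable fun s : {s : ℕ // j < s} => K / (j : ℝ) ^ b * g s :=
    (hg.subtype _).mul_left _
  calc ∑' s : {s : ℕ // j < s}, f s ≤ ∑' s : {s : ℕ // j < s}, K / (j : ℝ) ^ b * g s :=
        (hgj.of_nonneg_of_le (fun s : {s : ℕ // j < s} => hf0 s) hfg).tsum_le_tsum hfg hgj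
    _ = K / (j : ℝ) ^ b * ∑' s : {s : ℕ // j < s}, g s := tsum_mul_left
    _ ≤ K / (j : ℝ) ^ b * ∑' n, g n := by
        gcongr
        exact hg.tsum_subtype_le g {s | j < s} (fun _ => by positivity)
    _ = K * (∑' n : ℕ, ((n : ℝ) ^ a)⁻¹) / (j : ℝ) ^ b := by ring

theorem quarter_rpow_le_norm_ofReal_sub_sq {r a : ℝ} {w : ℂ} (ha : 0 ≤ a)
    (h : r - w.re ≤ -(1 / 2) * a ^ ((2 : ℝ) / 3)) :
    (1 / 4) * a ^ ((4 : ℝ) / 3) ≤ ‖(r : ℂ) - w‖ ^ 2 :=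
  calc (1 / 4) * a ^ ((4 : ℝ) / 3) = ((1 / 2) * a ^ ((2 : ℝ) / 3)) ^ 2 := by
        rw [mul_pow, ← Real.rpow_natCast (a ^ _), ← Real.rpow_mul ha]; norm_num
    _ ≤ (r - w.re) ^ 2 := by nlinarith [Real.rpow_nonneg ha ((2 : ℝ) / 3)]
    _ ≤ ‖(r : ℂ) - w‖ ^ 2 := sq_sub_re_le_norm_sq r w

theorem div_le_of_quarter_rpow_le {η d C s q : ℝ} (hη : 0 ≤ η) (hC : 0 < C) (hs : 0 < s)
    (h : (1 / 4) * (s / C) ^ q ≤ d) : η / d ≤ 4 * C ^ q * η * (s ^ q)⁻¹ :=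
  calc η / d ≤ η / ((1 / 4) * (s / C) ^ q) :=
        div_le_div_of_nonneg_left hη (by positivity) h
    _ = 4 * C ^ q * η * (s ^ q)⁻¹ := by
        rw [Real.div_rpow hs.le hC.le]
        field_simp

/-- Airy₁-type tail bound transfer: let `x_1 ≥ x_2 ≥ …` be a nonincreasing
sequence of reals with the counting bound `|{i : x_i ≥ -t}| ≤ C(1+t)^{3/2}` for
all `t ≥ 0` (with `C ≥ 1`). Then there are constants `C' > 0` and `C'' ≥ 1`
(depending only on `C`) such that for every `w = E + iη` in the upper
half-plane and every `j ≥ C''·C(1+|w|)^{3/2}` (the "large enough" threshold),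
one has `x_s - E ≤ -(1/2)(s/C)^{2/3}` and `|x_s - w|² ≥ (1/4)(s/C)^{4/3}` for
all `s > j`, and consequently `Σ_{s>j} η/|x_s - w|² ≤ C' η / j^{1/6}`. -/
theorem airy_tail_bound_transfer (C : ℝ) (hC : 1 ≤ C) :
    ∃ C' > (0 : ℝ), ∃ C'' ≥ (1 : ℝ),
      ∀ x : ℕ → ℝ, (∀ s t : ℕ, s ≤ t → x t ≤ x s) →
      (∀ t : ℝ, 0 ≤ t → {i : ℕ | -t ≤ x i}.Finite ∧
        ({i : ℕ | -t ≤ x i}.ncard : ℝ) ≤ C * (1 + t) ^ ((3 : ℝ) / 2)) →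
      ∀ w : ℂ, 0 < w.im → ∀ j : ℕ,
        C'' * C * (1 + ‖w‖) ^ ((3 : ℝ) / 2) ≤ (j : ℝ) →
        (∀ s : ℕ, j < s →
          x s - w.re ≤ -(1 / 2) * ((s : ℝ) / C) ^ ((2 : ℝ) / 3) ∧
          (1 / 4) * ((s : ℝ) / C) ^ ((4 : ℝ) / 3)
            ≤ ‖(x s : ℂ) - w‖ ^ 2) ∧
        (∑' s : {s : ℕ // j < s}, w.im / ‖(x (s : ℕ) : ℂ) - w‖ ^ 2)
          ≤ C' * w.im / (j : ℝ) ^ ((1 : ℝ) / 6) := by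
  have hC0 : 0 < C := by linarith
  set S := ∑' n : ℕ, ((n : ℝ) ^ ((7 : ℝ) / 6))⁻¹
  have hS : 0 < S := (Real.summable_nat_rpow_inv.mpr (by norm_num)).tsum_pos
    (fun _ => by positivity) 1 (by norm_num)
  refine ⟨4 * C ^ ((4 : ℝ) / 3) * S, by positivity, 2 ^ ((3 : ℝ) / 2),
    Real.one_le_rpow (by norm_num) (by norm_num), ?_⟩
  intro x hx hcount w hw j hj
  have hthreshold : C * (2 * (1 + ‖w‖)) ^ ((3 : ℝ) / 2) ≤ j := by
    rwa [Real.mul_rpow (by norm_num) (by positivity), mul_left_comm, ← mul_assoc]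
  have hre : ∀ s, j < s → x s - w.re ≤ -(1 / 2) * ((s : ℝ) / C) ^ ((2 : ℝ) / 3) := fun s hs => by
    have h23 : ((3 : ℝ) / 2)⁻¹ = 2 / 3 := by norm_num
    simpa only [h23] using sub_re_le_of_ncard_le hx hC0 (by norm_num) hcount w
      (hthreshold.trans (by exact_mod_cast hs.le))
  have hnorm : ∀ s, j < s → (1 / 4) * ((s : ℝ) / C) ^ ((4 : ℝ) / 3) ≤ ‖(x s : ℂ) - w‖ ^ 2 :=
    fun s hs => quarter_rpow_le_norm_ofReal_sub_sq (by positivity) (hre s hs)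
  refine ⟨fun s hs => ⟨hre s hs, hnorm s hs⟩, ?_⟩
  have hj0 : 0 < j := by
    have : (0 : ℝ) < j := lt_of_lt_of_le (by positivity) hthreshold
    exact_mod_cast this
  calc _ ≤ 4 * C ^ ((4 : ℝ) / 3) * w.im * S / (j : ℝ) ^ ((1 : ℝ) / 6) :=
        tsum_gt_le_of_le_mul_inv_rpow (f := fun s => w.im / ‖(x s : ℂ) - w‖ ^ 2) (a := 7 / 6) (by norm_num) (by norm_num) (by positivity) hj0
          (fun s => by positivity) fun s hs => by
            rw [show (7 / 6 + 1 / 6 : ℝ) = 4 / 3 by norm_num]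
            exact div_le_of_quarter_rpow_le hw.le hC0 (by exact_mod_cast hj0.trans hs) (hnorm s hs)
    _ = 4 * C ^ ((4 : ℝ) / 3) * S * w.im / (j : ℝ) ^ ((1 : ℝ) / 6) := by ring
end
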